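/- For every quantitative reachability game G and every configuration c₁ of G, the upper value equals the lower value: inf over strategies σ_Min of Min of the sup over strategies σ_Max of Max of Cost(Play(c₁,σ_Min,σ_Max)) equals sup over strategies σ_Max of Max of the inf over strategies σ_Min of Min of Cost(Play(c₁,σ_Min,σ_Max)) (both computed in ℝ∪{−∞,+∞}). -/
import Mathlib


/-!
Quantitative reachability games and their determinacy, following
"One-Clock Priced Timed Games with Negative Weights"
(Brihaye, Geeraerts, Haddad, Lefaucheux, Monmege), Theorem 1.
-/

noncomputable section
open scoped Classical

/-- A quantitative reachability game: an arena whose configurations are partitioned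
into those of player Min, those of player Max and the final ones, a (possibly
infinite) alphabet, a transition relation whose sources are non-final, and a price
`P` assigning a real number to every finite alternating sequence
`c₁ a₁ c₂ ⋯ a_{n-1} c_n` (represented by its initial configuration `c₁` together
with the list `[(a₁,c₂),…,(a_{n-1},c_n)]`). -/
structure QRG where
  Conf : Type
  Alph : Type
  isMin : Conf → Prop
  isMax : Conf → Prop
  isFin : Conf → Prop
  partition : ∀ c, (isMin c ∧ ¬isMax c ∧ ¬isFin c) ∨ (¬isMin c ∧ isMax c ∧ ¬isFin c) ∨
    (¬isMin c ∧ ¬isMax c ∧ isFin c)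
  E : Conf → Alph → Conf → Prop
  E_not_fin : ∀ c a c', E c a c' → ¬isFin c
  P : Conf → List (Alph × Conf) → ℝ

namespace QRG

/-- A move: a letter together with the successor configuration. -/
abbrev Move (G : QRG) := G.Alph × G.Conf

def canMove (G : QRG) (s : G.Conf) (m : G.Move) : Prop := G.E s m.1 m.2

/-- A deadlock: a configuration with no outgoing transition.  (In particular, every
final configuration is a deadlock.) -/
def deadlock (G : QRG) (s : G.Conf) : Prop := ¬∃ m : G.Move, G.canMove s m

/-- A finite play is represented by its initial configuration together with the list
of successive moves; `ValidFrom s l` states that all these moves follow `E`. -/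
def ValidFrom (G : QRG) : G.Conf → List G.Move → Prop
  | _, [] => True
  | s, m :: l => G.canMove s m ∧ ValidFrom G m.2 l

/-- Last configuration of a finite play. -/
def endConf (G : QRG) (s : G.Conf) (l : List G.Move) : G.Conf :=
  l.foldl (fun _ m => m.2) s

/-- A strategy of Min: it prescribes a legal move to every finite play ending in a
non-deadlock configuration owned by Min. -/
structure MinStrategy (G : QRG) where
  move : G.Conf → List G.Move → Option G.Move
  legal : ∀ s l, G.ValidFrom s l → G.isMin (G.endConf s l) →
    ¬G.deadlock (G.endConf s l) →
    ∃ m, move s l = some m ∧ G.canMove (G.endConf s l) m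

/-- A strategy of Max. -/
structure MaxStrategy (G : QRG) where
  move : G.Conf → List G.Move → Option G.Move
  legal : ∀ s l, G.ValidFrom s l → G.isMax (G.endConf s l) →
    ¬G.deadlock (G.endConf s l) →
    ∃ m, move s l = some m ∧ G.canMove (G.endConf s l) m

/-- One step of the play induced by a pair of strategies. -/
def step (G : QRG) (σmin : MinStrategy G) (σmax : MaxStrategy G) (s : G.Conf)
    (l : List G.Move) : List G.Move :=
  if G.deadlock (G.endConf s l) then l
  else if G.isMin (G.endConf s l) then
    match σmin.move s l with
    | some m => l ++ [m]
    | none => l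
  else
    match σmax.move s l with
    | some m => l ++ [m]
    | none => l

/-- The successive finite prefixes of the unique completed play determined by an
initial configuration and a pair of strategies. -/
def hist (G : QRG) (σmin : MinStrategy G) (σmax : MaxStrategy G) (s : G.Conf) :
    ℕ → List G.Move
  | 0 => []
  | n + 1 => G.step σmin σmax s (hist G σmin σmax s n)

/-- Price `Cost(Play(c₁, σ_Min, σ_Max))` of the unique completed play determined by
the initial configuration and the two strategies: `P` applied to the play if it is
finite and ends in a final configuration, `+∞` otherwise. -/
def playCost (G : QRG) (s : G.Conf) (σmin : MinStrategy G) (σmax : MaxStrategy G) :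
    EReal :=
  if h : ∃ n, G.isFin (G.endConf s (G.hist σmin σmax s n)) then
    ((G.P s (G.hist σmin σmax s (Nat.find h)) : ℝ) : EReal)
  else ⊤

end QRG

namespace QRG

/-! ### Auxiliary lemmas about plays -/

variable {G : QRG}

theorem validFrom_append {s : G.Conf} {l : List G.Move} {m : G.Move}
    (hv : G.ValidFrom s l) (hm : G.canMove (G.endConf s l) m) :
    G.ValidFrom s (l ++ [m]) := by
  induction l generalizing s with
  | nil => exact ⟨hm, trivial⟩
  | cons m' l ih => exact ⟨hv.1, ih hv.2 hm⟩

theorem endConf_append {s : G.Conf} {l : List G.Move} {m : G.Move} :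
    G.endConf s (l ++ [m]) = m.2 := by
  simp [QRG.endConf]

theorem fin_deadlock {c : G.Conf} (h : G.isFin c) : G.deadlock c :=
  fun ⟨_, hm⟩ => G.E_not_fin _ _ _ hm h

theorem step_deadlock {σmin : MinStrategy G} {σmax : MaxStrategy G} {s : G.Conf}
    {l : List G.Move} (h : G.deadlock (G.endConf s l)) :
    G.step σmin σmax s l = l := by
  rw [QRG.step, if_pos h]

theorem step_min {σmin : MinStrategy G} {σmax : MaxStrategy G} {s : G.Conf}
    {l : List G.Move} {m : G.Move} (hd : ¬G.deadlock (G.endConf s l))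
    (hmin : G.isMin (G.endConf s l)) (hmv : σmin.move s l = some m) :
    G.step σmin σmax s l = l ++ [m] := by
  rw [QRG.step, if_neg hd, if_pos hmin, hmv]

theorem step_max {σmin : MinStrategy G} {σmax : MaxStrategy G} {s : G.Conf}
    {l : List G.Move} {m : G.Move} (hd : ¬G.deadlock (G.endConf s l))
    (hmin : ¬G.isMin (G.endConf s l)) (hmv : σmax.move s l = some m) :
    G.step σmin σmax s l = l ++ [m] := by
  rw [QRG.step, if_neg hd, if_neg hmin, hmv]

/-- A non-deadlock, non-Min configuration is a Max configuration. -/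
theorem isMax_of_not_min {c : G.Conf} (hd : ¬G.deadlock c) (hm : ¬G.isMin c) :
    G.isMax c := by
  rcases G.partition c with ⟨h, _, _⟩ | ⟨_, h, _⟩ | ⟨_, _, h⟩
  · exact absurd h hm
  · exact h
  · exact absurd (fin_deadlock h) hd

theorem hist_valid (σmin : MinStrategy G) (σmax : MaxStrategy G) (s : G.Conf) :
    ∀ n, G.ValidFrom s (G.hist σmin σmax s n) := by
  intro n
  induction n with
  | zero => trivial
  | succ n ih =>
    show G.ValidFrom s (G.step σmin σmax s (G.hist σmin σmax s n))
    set l := G.hist σmin σmax s n with hl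
    by_cases hd : G.deadlock (G.endConf s l)
    · rw [step_deadlock hd]; exact ih
    · by_cases hmin : G.isMin (G.endConf s l)
      · obtain ⟨m, hmv, hcm⟩ := σmin.legal s l ih hmin hd
        rw [step_min hd hmin hmv]; exact validFrom_append ih hcm
      · obtain ⟨m, hmv, hcm⟩ := σmax.legal s l ih (isMax_of_not_min hd hmin) hd
        rw [step_max hd hmin hmv]; exact validFrom_append ih hcm

theorem hist_stable {σmin : MinStrategy G} {σmax : MaxStrategy G} {s : G.Conf} {n : ℕ}
    (h : G.deadlock (G.endConf s (G.hist σmin σmax s n))) :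
    ∀ k, G.hist σmin σmax s (n + k) = G.hist σmin σmax s n := by
  intro k
  induction k with
  | zero => rfl
  | succ k ih =>
    show G.step σmin σmax s (G.hist σmin σmax s (n + k)) = _
    rw [ih, step_deadlock h]

/-! ### The attractor construction -/

/-- Target histories: final, with price at most `x`. -/
def Tgt (G : QRG) (c₁ : G.Conf) (x : EReal) (l : List G.Move) : Prop :=
  G.isFin (G.endConf c₁ l) ∧ ((G.P c₁ l : EReal) ≤ x)

/-- Ordinal-indexed approximations of the set of histories from which Min can force
reaching a target history. -/
def approx (G : QRG) (c₁ : G.Conf) (x : EReal) : Ordinal.{0} → Set (List G.Move) :=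
  Ordinal.lt_wf.fix fun α ih =>
    {l | G.Tgt c₁ x l ∨
      (G.isMin (G.endConf c₁ l) ∧ ∃ m, G.canMove (G.endConf c₁ l) m ∧
        ∃ β, ∃ hβ : β < α, l ++ [m] ∈ ih β hβ) ∨
      (G.isMax (G.endConf c₁ l) ∧ (∃ m, G.canMove (G.endConf c₁ l) m) ∧
        ∀ m, G.canMove (G.endConf c₁ l) m → ∃ β, ∃ _hβ : β < α, l ++ [m] ∈ ih β _hβ)}

theorem mem_approx_iff {c₁ : G.Conf} {x : EReal} {α : Ordinal} {l : List G.Move} :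
    l ∈ G.approx c₁ x α ↔
      (G.Tgt c₁ x l ∨
      (G.isMin (G.endConf c₁ l) ∧ ∃ m, G.canMove (G.endConf c₁ l) m ∧
        ∃ β, β < α ∧ l ++ [m] ∈ G.approx c₁ x β) ∨
      (G.isMax (G.endConf c₁ l) ∧ (∃ m, G.canMove (G.endConf c₁ l) m) ∧
        ∀ m, G.canMove (G.endConf c₁ l) m → ∃ β, β < α ∧ l ++ [m] ∈ G.approx c₁ x β)) := by
  unfold approx
  conv_lhs => rw [WellFounded.fix_eq]
  simp only [Set.mem_setOf_eq, exists_prop]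

/-- The attractor: a history is in it iff it lies in some approximation. -/
def Attr (G : QRG) (c₁ : G.Conf) (x : EReal) (l : List G.Move) : Prop :=
  ∃ α : Ordinal.{0}, l ∈ G.approx c₁ x α

/-- Ordinal rank of a history in the attractor. -/
def rank (G : QRG) (c₁ : G.Conf) (x : EReal) (l : List G.Move) : Ordinal :=
  sInf {α : Ordinal.{0} | l ∈ G.approx c₁ x α}

theorem mem_approx_rank {c₁ : G.Conf} {x : EReal} {l : List G.Move}
    (h : G.Attr c₁ x l) : l ∈ G.approx c₁ x (G.rank c₁ x l) :=
  csInf_mem (s := {α : Ordinal.{0} | l ∈ G.approx c₁ x α}) h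

theorem rank_le {c₁ : G.Conf} {x : EReal} {l : List G.Move} {α : Ordinal}
    (h : l ∈ G.approx c₁ x α) : G.rank c₁ x l ≤ α :=
  csInf_le (OrderBot.bddBelow _) h

theorem tgt_mem_attr {c₁ : G.Conf} {x : EReal} {l : List G.Move}
    (h : G.Tgt c₁ x l) : G.Attr c₁ x l :=
  ⟨0, mem_approx_iff.mpr (Or.inl h)⟩

theorem min_mem_attr {c₁ : G.Conf} {x : EReal} {l : List G.Move} {m : G.Move}
    (hmin : G.isMin (G.endConf c₁ l)) (hcm : G.canMove (G.endConf c₁ l) m)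
    (h : G.Attr c₁ x (l ++ [m])) : G.Attr c₁ x l := by
  obtain ⟨α, hα⟩ := h
  refine ⟨α + 1, mem_approx_iff.mpr (Or.inr (Or.inl ⟨hmin, m, hcm, α, ?_, hα⟩))⟩
  rw [Ordinal.add_one_eq_succ]; exact Order.lt_succ α

theorem max_mem_attr {c₁ : G.Conf} {x : EReal} {l : List G.Move}
    (hmax : G.isMax (G.endConf c₁ l)) (hex : ∃ m, G.canMove (G.endConf c₁ l) m)
    (h : ∀ m, G.canMove (G.endConf c₁ l) m → G.Attr c₁ x (l ++ [m])) :
    G.Attr c₁ x l := by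
  set A : Ordinal := (⨆ m : {m : G.Move // G.canMove (G.endConf c₁ l) m},
    G.rank c₁ x (l ++ [m.1])) + 1 with hA
  refine ⟨A, mem_approx_iff.mpr (Or.inr (Or.inr ⟨hmax, hex, fun m hm => ?_⟩))⟩
  refine ⟨G.rank c₁ x (l ++ [m]), ?_, mem_approx_rank (h m hm)⟩
  calc G.rank c₁ x (l ++ [m])
      ≤ ⨆ m : {m : G.Move // G.canMove (G.endConf c₁ l) m}, G.rank c₁ x (l ++ [m.1]) :=
        le_ciSup (Ordinal.bddAbove_range _)
          (⟨m, hm⟩ : {m : G.Move // G.canMove (G.endConf c₁ l) m})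
    _ < A := by rw [hA, Ordinal.add_one_eq_succ]; exact Order.lt_succ _

/-- Case analysis on membership in the attractor, producing rank decrease. -/
theorem attr_cases {c₁ : G.Conf} {x : EReal} {l : List G.Move} (h : G.Attr c₁ x l) :
    G.Tgt c₁ x l ∨
    (G.isMin (G.endConf c₁ l) ∧ ∃ m, G.canMove (G.endConf c₁ l) m ∧
      G.Attr c₁ x (l ++ [m]) ∧ G.rank c₁ x (l ++ [m]) < G.rank c₁ x l) ∨
    (G.isMax (G.endConf c₁ l) ∧ (∃ m, G.canMove (G.endConf c₁ l) m) ∧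
      ∀ m, G.canMove (G.endConf c₁ l) m →
        G.Attr c₁ x (l ++ [m]) ∧ G.rank c₁ x (l ++ [m]) < G.rank c₁ x l) := by
  rcases mem_approx_iff.mp (mem_approx_rank h) with ht | ⟨hmin, m, hcm, β, hβ, hmem⟩ |
    ⟨hmax, hex, hall⟩
  · exact Or.inl ht
  · exact Or.inr (Or.inl ⟨hmin, m, hcm, ⟨β, hmem⟩, lt_of_le_of_lt (rank_le hmem) hβ⟩)
  · refine Or.inr (Or.inr ⟨hmax, hex, fun m hm => ?_⟩)
    obtain ⟨β, hβ, hmem⟩ := hall m hm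
    exact ⟨⟨β, hmem⟩, lt_of_le_of_lt (rank_le hmem) hβ⟩


theorem min_not_max {c : G.Conf} (h : G.isMin c) : ¬G.isMax c := by
  rcases G.partition c with ⟨_, h2, _⟩ | ⟨h1, _, _⟩ | ⟨h1, _, _⟩ <;>
    first | exact h2 | exact absurd h h1

theorem max_not_min {c : G.Conf} (h : G.isMax c) : ¬G.isMin c := by
  rcases G.partition c with ⟨_, h2, _⟩ | ⟨h1, _, _⟩ | ⟨h1, _, _⟩ <;>
    first | exact absurd h h2 | exact h1

theorem not_attr_min {c₁ : G.Conf} {x : EReal} {l : List G.Move} {m : G.Move}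
    (h : ¬G.Attr c₁ x l) (hmin : G.isMin (G.endConf c₁ l))
    (hcm : G.canMove (G.endConf c₁ l) m) : ¬G.Attr c₁ x (l ++ [m]) :=
  fun h' => h (min_mem_attr hmin hcm h')

theorem not_attr_max {c₁ : G.Conf} {x : EReal} {l : List G.Move}
    (h : ¬G.Attr c₁ x l) (hmax : G.isMax (G.endConf c₁ l))
    (hex : ∃ m, G.canMove (G.endConf c₁ l) m) :
    ∃ m, G.canMove (G.endConf c₁ l) m ∧ ¬G.Attr c₁ x (l ++ [m]) := by
  by_contra hc
  push_neg at hc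
  exact h (max_mem_attr hmax hex hc)

/-! ### Strategies -/

/-- Default move: any legal move, if one exists. -/
def defMove (G : QRG) (s : G.Conf) (l : List G.Move) : Option G.Move :=
  if h : ∃ m, G.canMove (G.endConf s l) m then some h.choose else none

theorem defMove_spec {s : G.Conf} {l : List G.Move} (hd : ¬G.deadlock (G.endConf s l)) :
    ∃ m, G.defMove s l = some m ∧ G.canMove (G.endConf s l) m := by
  have h : ∃ m, G.canMove (G.endConf s l) m := not_not.mp hd
  exact ⟨h.choose, dif_pos h, h.choose_spec⟩

/-- Condition for Min's attractor strategy to have a prescribed move. -/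
def MinCond (G : QRG) (c₁ : G.Conf) (x : EReal) (l : List G.Move) : Prop :=
  ∃ m, G.canMove (G.endConf c₁ l) m ∧ G.Attr c₁ x (l ++ [m]) ∧
    G.rank c₁ x (l ++ [m]) < G.rank c₁ x l

/-- Min's attractor strategy: follow the rank-decreasing move whenever possible. -/
def minStrat (G : QRG) (c₁ : G.Conf) (x : EReal) : MinStrategy G where
  move s l := if h : s = c₁ ∧ G.MinCond c₁ x l then some h.2.choose else G.defMove s l
  legal s l _ _ hd := by
    by_cases h : s = c₁ ∧ G.MinCond c₁ x l
    · obtain ⟨heq, hc⟩ := h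
      subst heq
      exact ⟨hc.choose, dif_pos ⟨rfl, hc⟩, hc.choose_spec.1⟩
    · obtain ⟨m, hm, hcm⟩ := defMove_spec hd
      exact ⟨m, by beta_reduce; rw [dif_neg h]; exact hm, hcm⟩

/-- Condition for Max's trap strategy to have a prescribed move. -/
def MaxCond (G : QRG) (c₁ : G.Conf) (x : EReal) (l : List G.Move) : Prop :=
  ∃ m, G.canMove (G.endConf c₁ l) m ∧ ¬G.Attr c₁ x (l ++ [m])

/-- Max's trap strategy: stay outside the attractor whenever possible. -/
def maxStrat (G : QRG) (c₁ : G.Conf) (x : EReal) : MaxStrategy G where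
  move s l := if h : s = c₁ ∧ G.MaxCond c₁ x l then some h.2.choose else G.defMove s l
  legal s l _ _ hd := by
    by_cases h : s = c₁ ∧ G.MaxCond c₁ x l
    · obtain ⟨heq, hc⟩ := h
      subst heq
      exact ⟨hc.choose, dif_pos ⟨rfl, hc⟩, hc.choose_spec.1⟩
    · obtain ⟨m, hm, hcm⟩ := defMove_spec hd
      exact ⟨m, by beta_reduce; rw [dif_neg h]; exact hm, hcm⟩

/-! ### Min forces the target from the attractor -/

theorem min_forces {c₁ : G.Conf} {x : EReal} (σmax : MaxStrategy G) :
    ∀ α : Ordinal, ∀ l : List G.Move, G.rank c₁ x l = α → G.Attr c₁ x l →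
      ∀ n, G.hist (G.minStrat c₁ x) σmax c₁ n = l →
      ∃ k, G.Tgt c₁ x (G.hist (G.minStrat c₁ x) σmax c₁ k) := by
  intro α
  induction α using Ordinal.induction with
  | h α ih =>
    intro l hrank hattr n hn
    have hv : G.ValidFrom c₁ l := hn ▸ hist_valid (G.minStrat c₁ x) σmax c₁ n
    rcases attr_cases hattr with ht | ⟨hmin, hcond⟩ | ⟨hmax, hex, hall⟩
    · exact ⟨n, hn ▸ ht⟩
    · have hC : G.MinCond c₁ x l := hcond
      have hd : ¬G.deadlock (G.endConf c₁ l) := fun hdl =>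
        hdl ⟨hC.choose, hC.choose_spec.1⟩
      have hmv : (G.minStrat c₁ x).move c₁ l = some hC.choose := dif_pos ⟨rfl, hC⟩
      have hstep : G.hist (G.minStrat c₁ x) σmax c₁ (n + 1) = l ++ [hC.choose] := by
        show G.step (G.minStrat c₁ x) σmax c₁ (G.hist (G.minStrat c₁ x) σmax c₁ n) = _
        rw [hn]
        exact step_min hd hmin hmv
      have hspec := hC.choose_spec
      exact ih _ (hrank ▸ hspec.2.2) _ rfl hspec.2.1 (n + 1) hstep
    · have hd : ¬G.deadlock (G.endConf c₁ l) := not_not.mpr hex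
      obtain ⟨m, hmv, hcm⟩ := σmax.legal c₁ l hv hmax hd
      have hstep : G.hist (G.minStrat c₁ x) σmax c₁ (n + 1) = l ++ [m] := by
        show G.step (G.minStrat c₁ x) σmax c₁ (G.hist (G.minStrat c₁ x) σmax c₁ n) = _
        rw [hn]
        exact step_max hd (max_not_min hmax) hmv
      obtain ⟨hattr', hrank'⟩ := hall m hcm
      exact ih _ (hrank ▸ hrank') _ rfl hattr' (n + 1) hstep

/-! ### Max stays outside the attractor -/

theorem max_avoids {c₁ : G.Conf} {x : EReal} (h0 : ¬G.Attr c₁ x [])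
    (σmin : MinStrategy G) :
    ∀ n, ¬G.Attr c₁ x (G.hist σmin (G.maxStrat c₁ x) c₁ n) := by
  intro n
  induction n with
  | zero => exact h0
  | succ n ih =>
    set l := G.hist σmin (G.maxStrat c₁ x) c₁ n with hl
    have hv : G.ValidFrom c₁ l := hist_valid σmin (G.maxStrat c₁ x) c₁ n
    show ¬G.Attr c₁ x (G.step σmin (G.maxStrat c₁ x) c₁ l)
    by_cases hd : G.deadlock (G.endConf c₁ l)
    · rw [step_deadlock hd]; exact ih
    · by_cases hmin : G.isMin (G.endConf c₁ l)
      · obtain ⟨m, hmv, hcm⟩ := σmin.legal c₁ l hv hmin hd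
        rw [step_min hd hmin hmv]
        exact not_attr_min ih hmin hcm
      · have hmax := isMax_of_not_min hd hmin
        have hC : G.MaxCond c₁ x l := not_attr_max ih hmax (not_not.mp hd)
        have hmv : (G.maxStrat c₁ x).move c₁ l = some hC.choose := dif_pos ⟨rfl, hC⟩
        rw [step_max hd hmin hmv]
        exact hC.choose_spec.2

/-! ### Cost bounds -/

theorem cost_le_of_tgt {c₁ : G.Conf} {x : EReal} {σmin : MinStrategy G}
    {σmax : MaxStrategy G} (h : ∃ k, G.Tgt c₁ x (G.hist σmin σmax c₁ k)) :
    G.playCost c₁ σmin σmax ≤ x := by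
  obtain ⟨k, hk⟩ := h
  have hfin : ∃ n, G.isFin (G.endConf c₁ (G.hist σmin σmax c₁ n)) := ⟨k, hk.1⟩
  rw [QRG.playCost, dif_pos hfin]
  have h1 := Nat.find_spec hfin
  have h2 : Nat.find hfin ≤ k := Nat.find_min' hfin hk.1
  have h3 : G.hist σmin σmax c₁ k = G.hist σmin σmax c₁ (Nat.find hfin) := by
    have := hist_stable (fin_deadlock h1) (k - Nat.find hfin)
    rwa [Nat.add_sub_cancel' h2] at this
  rw [h3] at hk
  exact hk.2

theorem cost_gt {c₁ : G.Conf} {x : EReal} {σmin : MinStrategy G}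
    {σmax : MaxStrategy G} (hx : x < ⊤)
    (h : ∀ n, ¬G.Tgt c₁ x (G.hist σmin σmax c₁ n)) :
    x < G.playCost c₁ σmin σmax := by
  rw [QRG.playCost]
  split_ifs with hfin
  · have h1 := Nat.find_spec hfin
    have h2 : ¬((G.P c₁ (G.hist σmin σmax c₁ (Nat.find hfin)) : EReal) ≤ x) :=
      fun hle => h _ ⟨h1, hle⟩
    exact not_le.mp h2
  · exact hx


end QRG


open QRG in
/-- **Determinacy of quantitative reachability games.** For every
quantitative reachability game `G` and configuration `c₁`, the upper value
`inf_{σ_Min} sup_{σ_Max} Cost(Play(c₁,σ_Min,σ_Max))` equals the lower value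
`sup_{σ_Max} inf_{σ_Min} Cost(Play(c₁,σ_Min,σ_Max))` (in `ℝ ∪ {-∞,+∞}`). -/
theorem qrg_determined (G : QRG) (c₁ : G.Conf) :
    (⨅ σmin : MinStrategy G, ⨆ σmax : MaxStrategy G, G.playCost c₁ σmin σmax) =
      (⨆ σmax : MaxStrategy G, ⨅ σmin : MinStrategy G, G.playCost c₁ σmin σmax) := by
  refine le_antisymm ?_ (iSup_iInf_le_iInf_iSup (f := fun σmax σmin => G.playCost c₁ σmin σmax))
  by_contra hcon
  rw [not_le] at hcon
  obtain ⟨x, hx1, hx2⟩ := exists_between hcon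
  by_cases h0 : G.Attr c₁ x []
  · have hle : ∀ σmax : MaxStrategy G, G.playCost c₁ (G.minStrat c₁ x) σmax ≤ x :=
      fun σmax => cost_le_of_tgt (min_forces σmax (G.rank c₁ x []) [] rfl h0 0 rfl)
    have hU : (⨅ σmin : MinStrategy G, ⨆ σmax : MaxStrategy G, G.playCost c₁ σmin σmax) ≤ x :=
      le_trans (iInf_le _ (G.minStrat c₁ x)) (iSup_le hle)
    exact absurd hx2 (not_lt.mpr hU)
  · have hx_top : x < ⊤ := lt_of_lt_of_le hx2 le_top
    have hgt : ∀ σmin : MinStrategy G, x < G.playCost c₁ σmin (G.maxStrat c₁ x) :=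
      fun σmin => cost_gt hx_top (fun n ht => max_avoids h0 σmin n (tgt_mem_attr ht))
    have hL : x ≤ ⨆ σmax : MaxStrategy G, ⨅ σmin : MinStrategy G, G.playCost c₁ σmin σmax :=
      le_trans (le_iInf fun σmin => (hgt σmin).le) (le_iSup (fun σmax : MaxStrategy G => ⨅ σmin : MinStrategy G, G.playCost c₁ σmin σmax) (G.maxStrat c₁ x))
    exact absurd hx1 (not_lt.mpr hL)
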